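/- For q = 1, the number of q-decreasing binary words of length n equals the Fibonacci number F(n+2) (with F(1)=F(2)=1); equivalently |W_{1,n}| satisfies |W_{1,0}|=1, |W_{1,1}|=2, and |W_{1,n}| = |W_{1,n-1}| + |W_{1,n-2}| for n ≥ 2. -/
import Mathlib


/-- A binary word (`true` = 1, `false` = 0) is `q`-decreasing if every
length-maximal occurrence of a factor `0^a 1^b` with `a > 0` satisfies
`q·a > b`. -/
def QDecreasing (q : ℝ) (w : List Bool) : Prop :=
  ∀ u v : List Bool, ∀ a b : ℕ, 0 < a →
    w = u ++ (List.replicate a false ++ List.replicate b true) ++ v →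
    u.getLast? ≠ some false → v.head? ≠ some true →
    q * a > b

namespace QDec


mutual
/-- state: reading (reversed word) inside a run of `true`s, `b` = trues seen in current run -/
def chkT : ℕ → List Bool → Bool
  | _, [] => true
  | b, true :: t => chkT (b+1) t
  | b, false :: t => chkF b t
/-- state: need `k` more `false`s before the next `true`/end -/
def chkF : ℕ → List Bool → Bool
  | k, [] => k == 0
  | 0, true :: t => chkT 1 t
  | _+1, true :: _ => false
  | 0, false :: t => chkF 0 t
  | k+1, false :: t => chkF k t
end

lemma chkF_zero (t : List Bool) : chkF 0 t = chkT 0 t := by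
  cases t with
  | nil => rfl
  | cons x s => cases x <;> rfl

lemma chkT_false (b : ℕ) (t : List Bool) : chkT b (false :: t) = chkF b t := rfl
lemma chkT_true (b : ℕ) (t : List Bool) : chkT b (true :: t) = chkT (b+1) t := rfl

lemma chkT_replicate_true (m : ℕ) : ∀ (c : ℕ) (r : List Bool),
    chkT c (List.replicate m true ++ r) = chkT (c + m) r := by
  induction m with
  | zero => intro c r; simp
  | succ k ih =>
    intro c r
    rw [List.replicate_succ, List.cons_append, chkT_true, ih]
    ring_nf

lemma chkF_replicate_false (m : ℕ) : ∀ (k : ℕ) (r : List Bool),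
    chkF k (List.replicate m false ++ r) = chkF (k - m) r := by
  induction m with
  | zero => intro k r; simp
  | succ j ih =>
    intro k r
    rw [List.replicate_succ, List.cons_append]
    cases k with
    | zero =>
      show chkF 0 (List.replicate j false ++ r) = _
      rw [ih]; simp
    | succ i =>
      show chkF i (List.replicate j false ++ r) = _
      rw [ih]; congr 1; omega

/-- insert a `true` before the first `false`位置... duplicates the first `false`,
 or appends a `true` if there is none. -/
def ins : List Bool → List Bool
  | [] => [true]
  | false :: t => false :: false :: t
  | true :: t => true :: ins t

def del : List Bool → List Bool
  | [] => []
  | false :: t => t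
  | true :: [] => []
  | true :: x :: t => true :: del (x :: t)

lemma ins_length : ∀ t : List Bool, (ins t).length = t.length + 1
  | [] => rfl
  | false :: t => rfl
  | true :: t => by simp [ins, ins_length t]

lemma del_ins : ∀ t : List Bool, del (ins t) = t
  | [] => rfl
  | false :: t => rfl
  | true :: t => by
    have h : ins t ≠ [] := by
      intro h; have := ins_length t; rw [h] at this; simp at this
    cases ht : ins t with
    | nil => exact absurd ht h
    | cons x s =>
      show del (true :: ins t) = true :: t
      rw [ht]
      show true :: del (x :: s) = true :: t
      rw [← ht, del_ins t]

lemma chkT_ins : ∀ (t : List Bool) (b : ℕ), chkT (b+1) (ins t) = chkT b t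
  | [], b => rfl
  | false :: t, b => by
    show chkF (b+1) (false :: t) = chkF b t
    rfl
  | true :: t, b => by
    show chkT (b+2) (ins t) = chkT (b+1) t
    exact chkT_ins t (b+1)

lemma ins_del : ∀ (t : List Bool), t ≠ [] → ∀ b : ℕ, chkT (b+1) t = true → ins (del t) = t
  | [], h, _, _ => absurd rfl h
  | false :: s, _, b, hc => by
    rw [chkT_false] at hc
    cases s with
    | nil => simp [chkF] at hc
    | cons x s' =>
      cases x with
      | true => simp [chkF] at hc
      | false => rfl
  | true :: [], _, b, _ => rfl
  | true :: x :: s, _, b, hc => by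
    rw [chkT_true] at hc
    have := ins_del (x :: s) (by simp) (b+1) hc
    simp [del, ins, this]



/-- helper for the run lemma -/
lemma run_helper {x : Bool} {s s' : List Bool} {m m' : ℕ}
    (h : s ++ List.replicate m x = s' ++ List.replicate m' x)
    (hle : m ≤ m') (hs : s.getLast? ≠ some x) : m = m' ∧ s = s' := by
  have hrep : List.replicate m' x = List.replicate (m' - m) x ++ List.replicate m x := by
    rw [← List.replicate_add]; congr 1; omega
  rw [hrep, ← List.append_assoc] at h
  have hss : s = s' ++ List.replicate (m' - m) x := List.append_cancel_right h
  rcases Nat.eq_zero_or_pos (m' - m) with h0 | hpos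
  · rw [h0] at hss; simp at hss
    constructor
    · omega
    · exact hss
  · exfalso
    obtain ⟨k, hk⟩ : ∃ k, m' - m = k + 1 := ⟨m' - m - 1, by omega⟩
    rw [hk, List.replicate_succ', ← List.append_assoc] at hss
    apply hs
    rw [hss, List.getLast?_concat]

/-- If a word is written in two ways as `s ++ x^m` with `s` not ending in `x`,
the representations agree. -/
lemma run_eq {x : Bool} {s s' : List Bool} {m m' : ℕ}
    (h : s ++ List.replicate m x = s' ++ List.replicate m' x)
    (hs : s.getLast? ≠ some x) (hs' : s'.getLast? ≠ some x) : m = m' ∧ s = s' := by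
  rcases le_total m m' with hle | hle
  · exact run_helper h hle hs
  · obtain ⟨h1, h2⟩ := run_helper h.symm hle hs'
    exact ⟨h1.symm, h2.symm⟩

lemma suffix_of_suffix {l₁ l₂ l : List Bool} (h₁ : l₁ <:+ l) (h₂ : l₂ <:+ l)
    (h : l₁.length ≤ l₂.length) : l₁ <:+ l₂ := by
  rw [← List.reverse_prefix] at h₁ h₂ ⊢
  exact List.prefix_of_prefix_length_le h₁ h₂ (by simpa using h)

lemma eq_replicate_of_suffix {l : List Bool} {n : ℕ} {x : Bool}
    (h : l <:+ List.replicate n x) : l = List.replicate l.length x := by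
  apply List.eq_replicate_length.mpr
  intro b hb
  exact List.eq_of_mem_replicate (h.subset hb)

lemma exists_false_run : ∀ r : List Bool, ∃ (a : ℕ) (r₂ : List Bool),
    r₂.head? ≠ some false ∧ r = List.replicate a false ++ r₂ := by
  intro r
  induction r with
  | nil => exact ⟨0, [], by simp, by simp⟩
  | cons x t ih =>
    cases x with
    | false =>
      obtain ⟨a, r₂, h1, h2⟩ := ih
      exact ⟨a + 1, r₂, h1, by rw [List.replicate_succ, List.cons_append, h2]⟩
    | true => exact ⟨0, true :: t, by simp, by simp⟩

lemma exists_decomp_rev : ∀ r : List Bool, false ∈ r →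
    ∃ (b a : ℕ) (r₂ : List Bool), 0 < a ∧ r₂.head? ≠ some false ∧
      r = List.replicate b true ++ (List.replicate a false ++ r₂) := by
  intro r
  induction r with
  | nil => intro h; simp at h
  | cons x t ih =>
    intro hmem
    cases x with
    | true =>
      have : false ∈ t := by simpa using hmem
      obtain ⟨b, a, r₂, h1, h2, h3⟩ := ih this
      exact ⟨b + 1, a, r₂, h1, h2, by rw [List.replicate_succ, List.cons_append, h3]⟩
    | false =>
      obtain ⟨a, r₂, h1, h2⟩ := exists_false_run (false :: t)
      refine ⟨0, a, r₂, ?_, h1, by simpa using h2⟩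
      rcases Nat.eq_zero_or_pos a with h0 | h
      · exfalso
        rw [h0] at h2
        simp at h2
        apply h1
        rw [← h2]
        rfl
      · exact h

/-- canonical decomposition of a word containing a `false` -/
lemma canonical_decomp {w : List Bool} (hf : false ∈ w) :
    ∃ (w₀ : List Bool) (a b : ℕ), 0 < a ∧ w₀.getLast? ≠ some false ∧
      w = w₀ ++ (List.replicate a false ++ List.replicate b true) ∧
      w.reverse = List.replicate b true ++ (List.replicate a false ++ w₀.reverse) := by
  have hfr : false ∈ w.reverse := by simpa using hf
  obtain ⟨b, a, r₂, ha, hhead, hr⟩ := exists_decomp_rev w.reverse hfr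
  refine ⟨r₂.reverse, a, b, ha, ?_, ?_, ?_⟩
  · rw [List.getLast?_reverse]; exact hhead
  · have hw : w = (w.reverse).reverse := by rw [List.reverse_reverse]
    rw [hw, hr]
    simp [List.reverse_append, List.reverse_replicate, List.append_assoc]
  · rw [hr, List.reverse_reverse]


lemma head?_replicate_pos {k : ℕ} (hk : 0 < k) (x : Bool) (l : List Bool) :
    (List.replicate k x ++ l).head? = some x := by
  obtain ⟨j, rfl⟩ : ∃ j, k = j + 1 := ⟨k - 1, by omega⟩
  simp [List.replicate_succ]

lemma getLast?_append_replicate_pos {k : ℕ} (hk : 0 < k) (x : Bool) (l : List Bool) :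
    (l ++ List.replicate k x).getLast? = some x := by
  obtain ⟨j, rfl⟩ : ∃ j, k = j + 1 := ⟨k - 1, by omega⟩
  rw [List.replicate_succ', ← List.append_assoc, List.getLast?_concat]

lemma qdec_peel₁ {w₀ : List Bool} {a b : ℕ} (ha : 0 < a)
    (hlast : w₀.getLast? ≠ some false)
    (h : QDecreasing 1 (w₀ ++ (List.replicate a false ++ List.replicate b true))) :
    b < a ∧ QDecreasing 1 w₀ := by
  constructor
  · have := h w₀ [] a b ha (by simp) hlast (by simp)
    rw [one_mul] at this
    exact_mod_cast this
  · intro u v a' b' ha' heq hu hv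
    apply h u (v ++ (List.replicate a false ++ List.replicate b true)) a' b' ha'
    · rw [heq]; simp [List.append_assoc]
    · exact hu
    · cases v with
      | nil => rw [List.nil_append, head?_replicate_pos ha]; simp
      | cons y s => simpa using hv

lemma qdec_peel₂ {w₀ : List Bool} {a b : ℕ} (hba : b < a)
    (hlast : w₀.getLast? ≠ some false) (hq : QDecreasing 1 w₀) :
    QDecreasing 1 (w₀ ++ (List.replicate a false ++ List.replicate b true)) := by
  have ha : 0 < a := by omega
  intro u v a' b' ha' heq hu hv
  by_cases hvlen : a + b ≤ v.length
  · -- the whole appended tail is inside v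
    have htailsuf : (List.replicate a false ++ List.replicate b true) <:+
        u ++ (List.replicate a' false ++ List.replicate b' true) ++ v := by
      rw [← heq]; exact List.suffix_append _ _
    have hvsuf : v <:+ u ++ (List.replicate a' false ++ List.replicate b' true) ++ v :=
      List.suffix_append _ _
    have h2 : (List.replicate a false ++ List.replicate b true) <:+ v :=
      suffix_of_suffix htailsuf hvsuf (by simpa using hvlen)
    obtain ⟨v₀, hv₀⟩ := h2
    have hw₀ : w₀ = u ++ (List.replicate a' false ++ List.replicate b' true) ++ v₀ := by
      have h3 : w₀ ++ (List.replicate a false ++ List.replicate b true)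
          = (u ++ (List.replicate a' false ++ List.replicate b' true) ++ v₀)
            ++ (List.replicate a false ++ List.replicate b true) := by
        rw [heq, ← hv₀]; simp [List.append_assoc]
      exact List.append_cancel_right h3
    apply hq u v₀ a' b' ha' hw₀ hu
    cases v₀ with
    | nil => simp
    | cons y s => rw [← hv₀] at hv; simpa using hv
  · -- v is a proper suffix of the appended tail
    push_neg at hvlen
    rcases Nat.eq_zero_or_pos b' with hb' | hb'
    · subst hb'
      rw [one_mul]
      exact_mod_cast ha'
    -- now b' ≥ 1
    have hvsuf : v <:+ (List.replicate a false ++ List.replicate b true) := by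
      apply suffix_of_suffix (l := w₀ ++ (List.replicate a false ++ List.replicate b true))
      · rw [heq]; exact List.suffix_append _ _
      · exact List.suffix_append _ _
      · simp; omega
    by_cases hvb : v.length ≤ b
    · -- v consists of trues only, hence v = []
      have hvrep : v = List.replicate v.length true := by
        apply eq_replicate_of_suffix (n := b)
        apply suffix_of_suffix hvsuf (List.suffix_append _ _) (by simpa using hvb)
      have hvnil : v = [] := by
        cases hc : v with
        | nil => rfl
        | cons y s =>
          exfalso
          rw [hc] at hvrep
          have hy : y = true := by
            simp [List.replicate_succ] at hvrep
            exact hvrep.1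
          rw [hc, hy] at hv
          exact hv rfl
      subst hvnil
      rw [List.append_nil] at heq
      have heq2 : (w₀ ++ List.replicate a false) ++ List.replicate b true
          = (u ++ List.replicate a' false) ++ List.replicate b' true := by
        simp only [List.append_assoc]
        exact heq
      obtain ⟨hbb, heq3⟩ := run_eq heq2
        (by rw [getLast?_append_replicate_pos ha]; simp)
        (by rw [getLast?_append_replicate_pos ha']; simp)
      obtain ⟨haa, -⟩ := run_eq heq3 hlast hu
      rw [one_mul]
      have hfin : b' < a' := by omega
      exact_mod_cast hfin
    · -- b < v.length < a + b : contradiction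
      exfalso
      push_neg at hvb
      have h1b : List.replicate b true <:+ (List.replicate a false ++ List.replicate b true) :=
        List.suffix_append _ _
      have h2 : List.replicate b true <:+ v :=
        suffix_of_suffix h1b hvsuf (by simpa using le_of_lt hvb)
      obtain ⟨v₂, hv₂⟩ := h2
      have hv₂len : v₂.length + b = v.length := by
        rw [← hv₂]; simp
      have hv₂suf : v₂ <:+ List.replicate a false := by
        have hsub : v₂ ++ List.replicate b true
            <:+ List.replicate a false ++ List.replicate b true := by
          rw [hv₂]; exact hvsuf
        obtain ⟨t, ht⟩ := hsub
        refine ⟨t, ?_⟩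
        have ht2 : (t ++ v₂) ++ List.replicate b true
            = List.replicate a false ++ List.replicate b true := by
          rw [List.append_assoc, ht]
        exact List.append_cancel_right ht2
      obtain ⟨k, hkv⟩ : ∃ k, v₂ = List.replicate k false :=
        ⟨v₂.length, eq_replicate_of_suffix hv₂suf⟩
      have hklen : k + b = v.length := by
        rw [hkv] at hv₂len; simpa using hv₂len
      rw [← hv₂, hkv] at heq
      have heq2 : (u ++ (List.replicate a' false ++ List.replicate b' true))
            ++ List.replicate k false ++ List.replicate b true
          = (w₀ ++ List.replicate a false) ++ List.replicate b true := by
        simp only [List.append_assoc]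
        exact (by simpa only [List.append_assoc] using heq.symm)
      have heq3 : (u ++ (List.replicate a' false ++ List.replicate b' true))
            ++ List.replicate k false = w₀ ++ List.replicate a false :=
        List.append_cancel_right heq2
      obtain ⟨haa, -⟩ := run_eq heq3
        (by rw [← List.append_assoc, getLast?_append_replicate_pos hb']; simp)
        hlast
      omega


lemma chk_peel {w₀ : List Bool} {a b : ℕ} (ha : 0 < a)
    (hlast : w₀.getLast? ≠ some false) :
    chkT 0 (List.replicate b true ++ (List.replicate a false ++ w₀.reverse)) = true
      ↔ (b < a ∧ chkT 0 w₀.reverse = true) := by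
  obtain ⟨a₀, rfl⟩ : ∃ a₀, a = a₀ + 1 := ⟨a - 1, by omega⟩
  rw [chkT_replicate_true, zero_add, List.replicate_succ, List.cons_append]
  show chkF b (List.replicate a₀ false ++ w₀.reverse) = true ↔ _
  rw [chkF_replicate_false]
  have hhead : w₀.reverse.head? ≠ some false := by
    rw [List.head?_reverse]; exact hlast
  rcases Nat.lt_or_ge b (a₀ + 1) with hba | hba
  · have : b - a₀ = 0 := by omega
    rw [this, chkF_zero]
    simp [hba]
  · obtain ⟨k, hk⟩ : ∃ k, b - a₀ = k + 1 := ⟨b - a₀ - 1, by omega⟩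
    rw [hk]
    constructor
    · intro hc
      exfalso
      cases hr : w₀.reverse with
      | nil => rw [hr] at hc; simp [chkF] at hc
      | cons y s =>
        cases y with
        | true => rw [hr] at hc; simp [chkF] at hc
        | false => rw [hr] at hhead; simp at hhead
    · intro hc
      omega
  
lemma qdec_all_true (m : ℕ) : QDecreasing 1 (List.replicate m true) := by
  intro u v a b ha heq hu hv
  exfalso
  have hfa : false ∈ List.replicate a false := by
    rw [List.mem_replicate]; exact ⟨by omega, rfl⟩
  have hmem : false ∈ List.replicate m true := by
    rw [heq]
    exact List.mem_append.mpr (Or.inl (List.mem_append.mpr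
      (Or.inr (List.mem_append.mpr (Or.inl hfa)))))
  simp [List.mem_replicate] at hmem

lemma chk_all_true (m : ℕ) : chkT 0 (List.replicate m true) = true := by
  have := chkT_replicate_true m 0 []
  rw [List.append_nil] at this
  rw [this]
  rfl

theorem qdec_iff_chk (w : List Bool) :
    QDecreasing 1 w ↔ chkT 0 w.reverse = true := by
  suffices H : ∀ n (w : List Bool), w.length = n →
      (QDecreasing 1 w ↔ chkT 0 w.reverse = true) from H w.length w rfl
  intro n
  induction n using Nat.strong_induction_on with
  | _ n ih =>
    intro w hlen
    by_cases hf : false ∈ w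
    · obtain ⟨w₀, a, b, ha, hlast, hw, hrev⟩ := canonical_decomp hf
      have hlt : w₀.length < n := by
        rw [hw] at hlen
        simp at hlen
        omega
      have IH := ih w₀.length hlt w₀ rfl
      rw [hrev, chk_peel ha hlast]
      constructor
      · intro hq
        obtain ⟨hba, hq₀⟩ := qdec_peel₁ ha hlast (hw ▸ hq)
        exact ⟨hba, IH.mp hq₀⟩
      · intro ⟨hba, hc⟩
        rw [hw]
        exact qdec_peel₂ hba hlast (IH.mpr hc)
    · have hw : w = List.replicate w.length true := by
        apply List.eq_replicate_length.mpr
        intro x hx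
        cases x
        · exact absurd hx hf
        · rfl
      rw [hw, List.reverse_replicate]
      exact ⟨fun _ => chk_all_true _, fun _ => qdec_all_true _⟩


lemma chkT0_false_cons (t : List Bool) : chkT 0 (false :: t) = chkT 0 t := by
  show chkF 0 t = _
  exact chkF_zero t

abbrev S (n : ℕ) := {r : List Bool // r.length = n ∧ chkT 0 r = true}

instance S_finite (n : ℕ) : Finite (S n) := by
  have h : {l : List Bool | l.length = n ∧ chkT 0 l = true}.Finite :=
    (List.finite_length_eq Bool n).subset (fun l hl => hl.1)
  exact h.to_subtype

lemma cardS_zero : Nat.card (S 0) = 1 := by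
  have : Unique (S 0) :=
    { default := ⟨[], rfl, rfl⟩
      uniq := fun r => by
        obtain ⟨r, h1, h2⟩ := r
        obtain rfl := List.length_eq_zero_iff.mp h1
        rfl }
  exact Nat.card_unique

lemma cardS_one : Nat.card (S 1) = 2 := by
  have e : S 1 ≃ Bool :=
    { toFun := fun r => r.1.headI
      invFun := fun x => ⟨[x], rfl, by cases x <;> rfl⟩
      left_inv := fun r => by
        obtain ⟨r, h1, h2⟩ := r
        obtain ⟨x, rfl⟩ := List.length_eq_one_iff.mp h1
        rfl
      right_inv := fun x => by cases x <;> rfl }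
  rw [Nat.card_congr e]
  simp

def g (n : ℕ) : S (n+1) ⊕ S n → S (n+2) := fun x =>
  match x with
  | Sum.inl ⟨t, ht1, ht2⟩ =>
      ⟨false :: t, by simp [ht1], by rw [chkT0_false_cons]; exact ht2⟩
  | Sum.inr ⟨u, hu1, hu2⟩ =>
      ⟨true :: ins u, by simp [ins_length, hu1],
        by show chkT 1 (ins u) = true; rw [chkT_ins]; exact hu2⟩

lemma g_bijective (n : ℕ) : Function.Bijective (g n) := by
  constructor
  · rintro (⟨t, ht1, ht2⟩ | ⟨u, hu1, hu2⟩) (⟨t', ht1', ht2'⟩ | ⟨u', hu1', hu2'⟩) h <;>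
      simp only [g, Sum.inl.injEq, Sum.inr.injEq, Subtype.mk.injEq, List.cons.injEq] at h ⊢
    · exact h.2
    · exact absurd h.1 (by simp)
    · exact absurd h.1 (by simp)
    · have := h.2
      have h2 : del (ins u) = del (ins u') := by rw [this]
      rwa [del_ins, del_ins] at h2
  · rintro ⟨r, h1, h2⟩
    cases r with
    | nil => simp at h1
    | cons x t =>
      cases x with
      | false =>
        refine ⟨Sum.inl ⟨t, by simpa using h1, by rw [← chkT0_false_cons]; exact h2⟩, ?_⟩
        rfl
      | true =>
        have htn : t ≠ [] := by
          intro h; rw [h] at h1; simp at h1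
        have hc1 : chkT 1 t = true := h2
        have hid : ins (del t) = t := ins_del t htn 0 hc1
        have hlen : (del t).length = n := by
          have := ins_length (del t)
          rw [hid] at this
          have h1' : t.length = n + 1 := by simpa using h1
          omega
        have hchk : chkT 0 (del t) = true := by
          rw [← chkT_ins (del t) 0, hid]
          exact hc1
        refine ⟨Sum.inr ⟨del t, hlen, hchk⟩, ?_⟩
        apply Subtype.ext
        show true :: ins (del t) = true :: t
        rw [hid]

lemma cardS_rec (n : ℕ) : Nat.card (S (n+2)) = Nat.card (S (n+1)) + Nat.card (S n) := by
  rw [← Nat.card_eq_of_bijective (g n) (g_bijective n), Nat.card_sum]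

lemma cardS (n : ℕ) : Nat.card (S n) = Nat.fib (n+2) := by
  induction n using Nat.strong_induction_on with
  | _ n ih =>
    match n with
    | 0 => rw [cardS_zero]; rfl
    | 1 => rw [cardS_one]; rfl
    | (m+2) =>
      rw [cardS_rec, ih (m+1) (by omega), ih m (by omega)]
      show Nat.fib (m+3) + Nat.fib (m+2) = Nat.fib (m+2+2)
      have h4 : Nat.fib (m+2+2) = Nat.fib (m+2) + Nat.fib (m+3) := Nat.fib_add_two
      rw [h4]
      omega


end QDec

/-- The number of `1`-decreasing binary words of length `n` is the Fibonacci
number `F(n+2)` (with `F(1) = F(2) = 1`). -/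
theorem stmt_7 (n : ℕ) :
    Nat.card {w : List Bool // w.length = n ∧ QDecreasing 1 w} =
      Nat.fib (n + 2) := by
  have e : {w : List Bool // w.length = n ∧ QDecreasing 1 w} ≃ QDec.S n :=
    { toFun := fun w => ⟨w.1.reverse, by simp [w.2.1], (QDec.qdec_iff_chk w.1).mp w.2.2⟩
      invFun := fun r => ⟨r.1.reverse, by simp [r.2.1],
        (QDec.qdec_iff_chk r.1.reverse).mpr (by rw [List.reverse_reverse]; exact r.2.2)⟩
      left_inv := fun w => Subtype.ext (by simp)
      right_inv := fun r => Subtype.ext (by simp) }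
  rw [Nat.card_congr e, QDec.cardS]
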